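/- Let V be the complex vector space with basis {e_c : c ∈ 𝔽₂⁴}, writing c = (c₁,c₂,c₃,c₄). Define linear maps on V by: T₁₁(e_c) = e_{(c₁,c₂,c₃,c₄+c₂+c₃)}; T₁₂(e_c) = (−1)^{c₁(c₂+c₃)} e_{(c₁,c₂+c₁,c₃+c₁,c₄)}; T₂₁(e_c) = e_{(c₁,c₃,c₂,c₄)}; T₂₂(e_c) = e_{(c₁,c₂,c₃,c₄+c₁)}; T₃₁(e_c) = (1/2)(e_{(c₁,c₂,c₃,c₄)} + e_{(c₁,c₂,c₃,c₄+1)}) + (1/2)(−1)^{c₂+c₃}(e_{(c₁,c₂+1,c₃+1,c₄)} − e_{(c₁,c₂+1,c₃+1,c₄+1)}); T₃₂(e_c) = (−1)^{c₁(c₂+c₃)} e_c (all index arithmetic in 𝔽₂). Then each of the six maps T_{ar} squares to the identity and any two of them commute; hence they generate a linear (not merely projective) representation of (ℤ/2ℤ)⁶ on V, so the associated 2-cocycle is trivial. -/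

import Mathlib

/-- `(-1)^x` for `x ∈ 𝔽₂`, as a complex number. -/
def sgnZ2 (x : ZMod 2) : ℂ := if x = 1 then -1 else 1

/-- Index set `𝔽₂⁴` for the basis `e_c` of the defect representation `Ω₀` (for `m = 3`). -/
abbrev BWIdx := Fin 4 → ZMod 2

/-- `T₁₁ : e_c ↦ e_{(c₁, c₂, c₃, c₄ + c₂ + c₃)}`. -/
noncomputable def T11 : Matrix BWIdx BWIdx ℂ :=
  Matrix.of fun c d => if d = ![c 0, c 1, c 2, c 3 + c 1 + c 2] then 1 else 0

/-- `T₁₂ : e_c ↦ (-1)^{c₁(c₂+c₃)} e_{(c₁, c₂ + c₁, c₃ + c₁, c₄)}`. -/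
noncomputable def T12 : Matrix BWIdx BWIdx ℂ :=
  Matrix.of fun c d =>
    if d = ![c 0, c 1 + c 0, c 2 + c 0, c 3] then sgnZ2 (c 0 * (c 1 + c 2)) else 0

/-- `T₂₁ : e_c ↦ e_{(c₁, c₃, c₂, c₄)}`. -/
noncomputable def T21 : Matrix BWIdx BWIdx ℂ :=
  Matrix.of fun c d => if d = ![c 0, c 2, c 1, c 3] then 1 else 0

/-- `T₂₂ : e_c ↦ e_{(c₁, c₂, c₃, c₄ + c₁)}`. -/
noncomputable def T22 : Matrix BWIdx BWIdx ℂ :=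
  Matrix.of fun c d => if d = ![c 0, c 1, c 2, c 3 + c 0] then 1 else 0

/-- `T₃₁ : e_c ↦ ½(e_c + e_{(c₁,c₂,c₃,c₄+1)})
  + ½(-1)^{c₂+c₃}(e_{(c₁,c₂+1,c₃+1,c₄)} - e_{(c₁,c₂+1,c₃+1,c₄+1)})`. -/
noncomputable def T31 : Matrix BWIdx BWIdx ℂ :=
  Matrix.of fun c d =>
    (1 / 2) * ((if d = c then 1 else 0) + (if d = ![c 0, c 1, c 2, c 3 + 1] then 1 else 0)) +
      (1 / 2) * sgnZ2 (c 1 + c 2) *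
        ((if d = ![c 0, c 1 + 1, c 2 + 1, c 3] then 1 else 0) -
          (if d = ![c 0, c 1 + 1, c 2 + 1, c 3 + 1] then 1 else 0))

/-- `T₃₂ : e_c ↦ (-1)^{c₁(c₂+c₃)} e_c`. -/
noncomputable def T32 : Matrix BWIdx BWIdx ℂ :=
  Matrix.of fun c d => if d = c then sgnZ2 (c 0 * (c 1 + c 2)) else 0

/-- The six intertwiner matrices. -/
noncomputable def Tmats : Fin 6 → Matrix BWIdx BWIdx ℂ := ![T11, T12, T21, T22, T31, T32]

/-!
Five of the six maps are signed permutation matrices `e_c ↦ (-1)^{σ c} e_{f c}`. These multiply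
like pairs `(f, σ)`, so squaring to `1` and commuting reduce to identities between index maps
and sign exponents on the sixteen points of `𝔽₂⁴`. The map `T₃₁` is not monomial, but
`T₃₁ = ½((1 + X) + Y(1 - X))` for the signed permutations `X : e_c ↦ e_{c + (0,0,0,1)}` and
`Y : e_c ↦ (-1)^{c₂+c₃} e_{c + (0,1,1,0)}`. Hence all six maps lie in the algebra generated by
seven pairwise commuting signed permutations, which is commutative, and `T₃₁² = 1` because
`((1 + X) + Y(1 - X))² = 2(1 + X) + 2(1 - X) = 4` for commuting involutions `X, Y`. Pairwise
commuting involutions define a homomorphism out of `(ℤ/2ℤ)⁶`.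
-/

theorem ZMod.two_eq_zero_or_one (x : ZMod 2) : x = 0 ∨ x = 1 := by
  revert x; decide

def involutionHom {M : Type*} [Monoid M] (T : M) (hT : T * T = 1) :
    Multiplicative (ZMod 2) →* M where
  toFun b := if b.toAdd = 1 then T else 1
  map_one' := by simp
  map_mul' a b := by
    rcases a.toAdd.two_eq_zero_or_one with ha | ha <;>
      rcases b.toAdd.two_eq_zero_or_one with hb | hb <;>
      simp [toAdd_mul, ha, hb, hT, show (1 + 1 : ZMod 2) = 0 from rfl]

theorem exists_monoidHom_pi_zmod_two_of_commute {ι M : Type*} [Fintype ι] [DecidableEq ι]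
    [Monoid M] (T : ι → M) (hT : ∀ k, T k * T k = 1)
    (hcomm : Pairwise fun k l => Commute (T k) (T l)) :
    ∃ φ : Multiplicative (ι → ZMod 2) →* M, ∀ k, φ (.ofAdd (Pi.single k 1)) = T k := by
  let ψ k := involutionHom (T k) (hT k)
  refine ⟨(MonoidHom.noncommPiCoprod ψ fun k l hkl x y => ?_).comp
    (MulEquiv.funMultiplicative ι (ZMod 2)).toMonoidHom, fun k => ?_⟩
  · simp only [ψ, involutionHom, MonoidHom.coe_mk, OneHom.coe_mk]
    split_ifs <;> simp [hcomm hkl]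
  · have hsingle : MulEquiv.funMultiplicative ι (ZMod 2) (.ofAdd (Pi.single k 1)) =
        Pi.mulSingle k (.ofAdd 1) := by
      ext j
      rcases eq_or_ne j k with rfl | hjk <;> simp [*]
    simp [hsingle, ψ, involutionHom]

theorem one_add_add_mul_one_sub_mul_self {A : Type*} [Ring A] {X Y : A} (hX : X * X = 1)
    (hY : Y * Y = 1) (hXY : Commute X Y) :
    ((1 + X) + Y * (1 - X)) * ((1 + X) + Y * (1 - X)) = 4 := by
  have hP : (1 + X) * Y = Y * (1 + X) := ((Commute.one_left Y).add_left hXY).eq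
  have hQ : (1 - X) * Y = Y * (1 - X) := ((Commute.one_left Y).sub_left hXY).eq
  have hPQ : (1 + X) * (1 - X) = 0 := by rw [mul_sub, mul_one, add_mul, one_mul, hX]; abel
  have hQP : (1 - X) * (1 + X) = 0 := by rw [mul_add, mul_one, sub_mul, one_mul, hX]; abel
  calc ((1 + X) + Y * (1 - X)) * ((1 + X) + Y * (1 - X))
      = (1 + X) * (1 + X) + Y * ((1 + X) * (1 - X)) + Y * ((1 - X) * (1 + X))
          + (Y * Y) * ((1 - X) * (1 - X)) := by
        simp only [add_mul, mul_add, ← mul_assoc, hP, mul_assoc Y (1 - X) Y, hQ]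
        abel
    _ = 4 := by
        rw [hPQ, hQP, hY]; noncomm_ring; rw [hX]; norm_num

theorem sgnZ2_add (a b : ZMod 2) : sgnZ2 (a + b) = sgnZ2 a * sgnZ2 b := by
  rcases a.two_eq_zero_or_one with rfl | rfl <;> rcases b.two_eq_zero_or_one with rfl | rfl <;>
    simp [sgnZ2, show (1 + 1 : ZMod 2) = 0 from rfl]

def signedMonomial {n : Type*} [DecidableEq n] (f : n → n) (σ : n → ZMod 2) : Matrix n n ℂ :=
  Matrix.of fun c d => if d = f c then sgnZ2 (σ c) else 0

section SignedMonomial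

variable {n : Type*} [DecidableEq n]

theorem signedMonomial_id_zero : signedMonomial (id : n → n) 0 = 1 := by
  ext c d
  simp [signedMonomial, Matrix.one_apply, sgnZ2, eq_comm]

variable [Fintype n]

theorem signedMonomial_mul (f g : n → n) (σ τ : n → ZMod 2) :
    signedMonomial f σ * signedMonomial g τ = signedMonomial (g ∘ f) (σ + τ ∘ f) := by
  ext c d
  simp only [signedMonomial, Matrix.mul_apply, Matrix.of_apply, ite_mul, zero_mul,
    Finset.sum_ite_eq', Finset.mem_univ, if_true, Function.comp_apply, Pi.add_apply, sgnZ2_add]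
  split_ifs <;> simp

theorem signedMonomial_commute {f g : n → n} {σ τ : n → ZMod 2}
    (h : ∀ c, g (f c) = f (g c) ∧ σ c + τ (f c) = τ c + σ (g c)) :
    Commute (signedMonomial f σ) (signedMonomial g τ) := by
  rw [Commute, SemiconjBy, signedMonomial_mul, signedMonomial_mul]
  congr 1 <;> funext c
  exacts [(h c).1, (h c).2]

theorem signedMonomial_mul_self {f : n → n} {σ : n → ZMod 2}
    (h : ∀ c, f (f c) = c ∧ σ c + σ (f c) = 0) :
    signedMonomial f σ * signedMonomial f σ = 1 := by
  rw [signedMonomial_mul, ← signedMonomial_id_zero]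
  congr 1 <;> funext c
  exacts [(h c).1, (h c).2]

end SignedMonomial

/-- Slots `0, 1, 2, 3, 5` are `T₁₁, T₁₂, T₂₁, T₂₂, T₃₂`; slots `4` and `6` are the maps `X`
and `Y` with `T₃₁ = ½((1 + X) + Y(1 - X))`. -/
def bwIndexMap : Fin 7 → BWIdx → BWIdx :=
  ![fun c => ![c 0, c 1, c 2, c 3 + c 1 + c 2], fun c => ![c 0, c 1 + c 0, c 2 + c 0, c 3],
    fun c => ![c 0, c 2, c 1, c 3], fun c => ![c 0, c 1, c 2, c 3 + c 0],
    fun c => ![c 0, c 1, c 2, c 3 + 1], fun c => c, fun c => ![c 0, c 1 + 1, c 2 + 1, c 3]]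

def bwSignExp : Fin 7 → BWIdx → ZMod 2 :=
  ![0, fun c => c 0 * (c 1 + c 2), 0, 0, 0, fun c => c 0 * (c 1 + c 2), fun c => c 1 + c 2]

noncomputable def bwMonomial (i : Fin 7) : Matrix BWIdx BWIdx ℂ :=
  signedMonomial (bwIndexMap i) (bwSignExp i)

theorem bwMonomial_mul_self (i : Fin 7) : bwMonomial i * bwMonomial i = 1 :=
  signedMonomial_mul_self <| by revert i; decide +kernel

theorem bwMonomial_commute (i j : Fin 7) : Commute (bwMonomial i) (bwMonomial j) :=
  signedMonomial_commute <| by revert i j; decide +kernel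

theorem T31_eq :
    T31 = (1 / 2 : ℂ) • ((1 + bwMonomial 4) + bwMonomial 6 * (1 - bwMonomial 4)) := by
  rw [mul_sub, mul_one, bwMonomial, bwMonomial, signedMonomial_mul]
  ext c d
  simp only [T31, signedMonomial, Matrix.of_apply, Matrix.smul_apply, Matrix.add_apply,
    Matrix.sub_apply, Matrix.one_apply, Function.comp_apply, Pi.add_apply, smul_eq_mul,
    @eq_comm _ c d, bwIndexMap, bwSignExp, Matrix.cons_val', Matrix.cons_val_fin_one,
    Matrix.cons_val, Matrix.cons_val_one, Matrix.cons_val_zero, Pi.zero_apply, zero_ne_one,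
    if_false, add_zero, sgnZ2]
  split_ifs <;> norm_num

theorem T31_mul_self : T31 * T31 = 1 := by
  rw [T31_eq, smul_mul_smul_comm, one_add_add_mul_one_sub_mul_self (bwMonomial_mul_self 4)
    (bwMonomial_mul_self 6) (bwMonomial_commute 4 6),
    ← map_ofNat (algebraMap ℂ (Matrix BWIdx BWIdx ℂ)) 4, Algebra.smul_def, ← map_mul]
  norm_num

theorem Tmats_eq_bwMonomial (k : Fin 6) (hk : k ≠ 4) : Tmats k = bwMonomial k.castSucc := by
  fin_cases k <;> first | exact absurd rfl hk | ext c d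
  all_goals
    simp [Tmats, T11, T12, T21, T22, T32, bwMonomial, signedMonomial, bwIndexMap, bwSignExp, sgnZ2]

theorem Tmats_mem_adjoin (k : Fin 6) : Tmats k ∈ Algebra.adjoin ℂ (Set.range bwMonomial) := by
  have hmem (i : Fin 7) : bwMonomial i ∈ Algebra.adjoin ℂ (Set.range bwMonomial) :=
    Algebra.subset_adjoin (Set.mem_range_self i)
  by_cases hk : k = 4
  · subst hk
    rw [show Tmats 4 = T31 from rfl, T31_eq]
    exact Subalgebra.smul_mem _
      (add_mem (add_mem (one_mem _) (hmem 4)) (mul_mem (hmem 6) (sub_mem (one_mem _) (hmem 4)))) _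
  · rw [Tmats_eq_bwMonomial k hk]
    exact hmem _

theorem Tmats_commute (k l : Fin 6) : Commute (Tmats k) (Tmats l) :=
  have := Algebra.isMulCommutative_adjoin ℂ (s := Set.range bwMonomial)
    (by rintro _ ⟨i, rfl⟩ _ ⟨j, rfl⟩; exact (bwMonomial_commute i j).eq)
  setLike_mul_comm (Tmats_mem_adjoin k) (Tmats_mem_adjoin l)

theorem Tmats_mul_self (k : Fin 6) : Tmats k * Tmats k = 1 := by
  by_cases hk : k = 4
  · subst hk
    exact T31_mul_self
  · rw [Tmats_eq_bwMonomial k hk]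
    exact bwMonomial_mul_self _

/-- The six intertwiner matrices `T_{ar}` for `m = 3` square to the identity and pairwise
commute; hence they generate a linear (not merely projective) representation of `(ℤ/2ℤ)⁶`,
so the associated 2-cocycle is trivial. -/
theorem m3_intertwiners_linear_rep :
    (∀ k : Fin 6, Tmats k * Tmats k = 1) ∧
    (∀ k l : Fin 6, Tmats k * Tmats l = Tmats l * Tmats k) ∧
    ∃ φ : (Fin 6 → ZMod 2) → Matrix BWIdx BWIdx ℂ,
      φ 0 = 1 ∧ (∀ x y, φ (x + y) = φ x * φ y) ∧
      ∀ k : Fin 6, φ (Pi.single k 1) = Tmats k := by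
  obtain ⟨φ, hφ⟩ := exists_monoidHom_pi_zmod_two_of_commute Tmats Tmats_mul_self
    fun k l _ => Tmats_commute k l
  exact ⟨Tmats_mul_self, fun k l => (Tmats_commute k l).eq, fun x => φ (.ofAdd x), map_one φ,
    fun x y => map_mul φ (.ofAdd x) (.ofAdd y), hφ⟩
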